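/- arXiv:math/0405075 — 4 statements merged into one kernel-verified Lean document; each statement's English description precedes it below -/
import Mathlib

section
/- Let A = (A_1, ..., A_n) be an n-tuple of vectors in ℝ^p with n ≥ 1. The system of equations ∑_{i=1}^n A_i |z_i|^2 = 0, ∑_{i=1}^n |z_i|^2 = 1 in z ∈ ℂ^n defines a nonempty set on which the system is nondegenerate at every solution point if and only if: (Siegel condition) 0 lies in the convex hull of {A_1, ..., A_n}, and (weak hyperbolicity) for every subset I ⊆ {1,...,n}, if 0 lies in the convex hull of {A_i : i ∈ I} then |I| > p. -/
open Set

/-- The link of the system of special real quadrics given by `A`: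
`∑ Aᵢ |zᵢ|² = 0`, `∑ |zᵢ|² = 1`. -/
def linkSet {n p : ℕ} (A : Fin n → (Fin p → ℝ)) : Set (Fin n → ℂ) :=
  {z | ∑ i, Complex.normSq (z i) • A i = 0 ∧ ∑ i, Complex.normSq (z i) = 1}

/-- Siegel condition: `0` lies in the convex hull of the `Aᵢ`. -/
def Siegel {n p : ℕ} (A : Fin n → (Fin p → ℝ)) : Prop :=
  (0 : Fin p → ℝ) ∈ convexHull ℝ (Set.range A)

/-- Weak hyperbolicity: any subset of the `Aᵢ` whose convex hull contains `0`
has more than `p` elements. -/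
def WeakHyp {n p : ℕ} (A : Fin n → (Fin p → ℝ)) : Prop :=
  ∀ I : Finset (Fin n), (0 : Fin p → ℝ) ∈ convexHull ℝ (A '' ↑I) → p < I.card

/-- Nondegeneracy of the system at a point `z`: the vectors `(Aᵢ, 1) ∈ ℝ^{p+1}`
for `i ∈ I_z = {i | zᵢ ≠ 0}` span a space of dimension `p+1`, i.e. the matrix
with these columns has rank `p+1`. -/
def NondegAt {n p : ℕ} (A : Fin n → (Fin p → ℝ)) (z : Fin n → ℂ) : Prop :=
  Module.finrank ℝ (Submodule.span ℝ
    ((fun i => (Fin.snoc (A i) (1 : ℝ) : Fin (p+1) → ℝ)) '' {i | z i ≠ 0})) = p + 1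

/-- Extract a system of convex weights witnessing `0 ∈ convexHull (A '' I)`,
supported on `I` and indexed by `Fin n`. -/
lemma exists_weights_of_mem_hull {n p : ℕ} [Nonempty (Fin n)] (A : Fin n → (Fin p → ℝ))
    (I : Finset (Fin n)) (h : (0 : Fin p → ℝ) ∈ convexHull ℝ (A '' ↑I)) :
    ∃ w : Fin n → ℝ, (∀ i, 0 ≤ w i) ∧ ∑ i, w i = 1 ∧ ∑ i, w i • A i = 0 ∧
      ∀ i, w i ≠ 0 → i ∈ I := by
  classical
  rw [convexHull_eq] at h
  obtain ⟨ι, t, W, zf, hW0, hW1, hz, hcm⟩ := h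
  have hch : ∀ i ∈ t, ∃ k, k ∈ (I : Set (Fin n)) ∧ A k = zf i := fun i hi => hz i hi
  set j : ι → Fin n := fun i => if hi : i ∈ t then (hch i hi).choose else Classical.arbitrary _
    with hj
  have hjI : ∀ i ∈ t, j i ∈ I ∧ A (j i) = zf i := by
    intro i hi
    simp only [hj, dif_pos hi]
    exact ⟨(hch i hi).choose_spec.1, (hch i hi).choose_spec.2⟩
  refine ⟨fun k => ∑ i ∈ t, if j i = k then W i else 0, ?_, ?_, ?_, ?_⟩
  · intro k
    refine Finset.sum_nonneg fun i hi => ?_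
    split
    · exact hW0 i hi
    · exact le_rfl
  · simp only []
    rw [Finset.sum_comm]
    rw [← hW1]
    refine Finset.sum_congr rfl fun i hi => ?_
    rw [Finset.sum_ite_eq Finset.univ (j i) (fun _ => W i), if_pos (Finset.mem_univ _)]
  · simp only [Finset.sum_smul]
    rw [Finset.sum_comm]
    have : ∀ i ∈ t, ∑ k : Fin n, (if j i = k then W i else 0) • A k = W i • zf i := by
      intro i hi
      have : ∀ k, (if j i = k then W i else 0) • A k = if j i = k then W i • A k else 0 :=
        fun k => by split <;> simp
      simp only [this]
      rw [Finset.sum_ite_eq Finset.univ (j i) (fun k => W i • A k), if_pos (Finset.mem_univ _),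
        (hjI i hi).2]
    rw [Finset.sum_congr rfl this, ← Finset.centerMass_eq_of_sum_1 _ _ hW1, hcm]
  · intro k hk
    by_contra hkI
    apply hk
    apply Finset.sum_eq_zero
    intro i hi
    rw [if_neg]
    intro he; exact hkI (he ▸ (hjI i hi).1)

/-- From a system of convex weights one gets a point of the link by taking square
roots; its support is the support of the weights. -/
lemma sqrt_weights_mem_link {n p : ℕ} (A : Fin n → (Fin p → ℝ)) (w : Fin n → ℝ)
    (hw0 : ∀ i, 0 ≤ w i) (hw1 : ∑ i, w i = 1) (hwA : ∑ i, w i • A i = 0) :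
    (fun i => ((Real.sqrt (w i) : ℝ) : ℂ)) ∈ linkSet A ∧
    ∀ i, (((Real.sqrt (w i) : ℝ) : ℂ) ≠ 0 ↔ w i ≠ 0) := by
  have key : ∀ i, Complex.normSq ((Real.sqrt (w i) : ℝ) : ℂ) = w i := fun i => by
    rw [Complex.normSq_ofReal, Real.mul_self_sqrt (hw0 i)]
  refine ⟨⟨?_, ?_⟩, ?_⟩
  · simpa only [key] using hwA
  · simpa only [key] using hw1
  · intro i
    rw [not_iff_not, Complex.ofReal_eq_zero, Real.sqrt_eq_zero (hw0 i)]

/-- From convex weights summing `A` to zero and supported in a finset `s`,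
`0` lies in the convex hull of `A '' s`. -/
lemma zero_mem_hull_of_weights {n p : ℕ} (A : Fin n → (Fin p → ℝ)) (s : Finset (Fin n))
    (w : Fin n → ℝ) (h0 : ∀ i ∈ s, 0 ≤ w i) (h1 : ∑ i ∈ s, w i = 1)
    (hA : ∑ i ∈ s, w i • A i = 0) :
    (0 : Fin p → ℝ) ∈ convexHull ℝ (A '' ↑s) := by
  have := Finset.centerMass_mem_convexHull s h0 (by rw [h1]; norm_num)
    (fun i hi => Set.mem_image_of_mem A (by exact_mod_cast hi))
  rwa [Finset.centerMass_eq_of_sum_1 _ _ h1, hA] at this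

/-- An affinely independent family of points in `ℝ^p`, extended by `1` in the last
coordinate, is linearly independent in `ℝ^{p+1}`. -/
lemma snoc_linearIndependent {p : ℕ} (T : Finset (Fin p → ℝ))
    (hai : AffineIndependent ℝ ((↑) : T → (Fin p → ℝ))) :
    LinearIndependent ℝ (fun y : T => (Fin.snoc (y : Fin p → ℝ) (1:ℝ) : Fin (p+1) → ℝ)) := by
  rw [Fintype.linearIndependent_iff]
  intro g hg y
  have hlast := congrFun hg (Fin.last p)
  simp only [Finset.sum_apply, Pi.smul_apply, Fin.snoc_last, Pi.zero_apply, smul_eq_mul,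
    mul_one] at hlast
  have hsum : ∑ x : T, g x • (x : Fin p → ℝ) = 0 := by
    funext k
    have := congrFun hg (Fin.castSucc k)
    simpa [Finset.sum_apply, Fin.snoc_castSucc] using this
  exact affineIndependent_iff.1 hai Finset.univ g hlast hsum y (Finset.mem_univ y)

/-- Weak hyperbolicity implies nondegeneracy at every point of the link. -/
lemma nondeg_of_weakHyp {n p : ℕ} (A : Fin n → (Fin p → ℝ)) (hW : WeakHyp A)
    (z : Fin n → ℂ) (hz : z ∈ linkSet A) : NondegAt A z := by
  classical
  obtain ⟨hz0, hz1⟩ := hz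
  set S : Finset (Fin n) := Finset.univ.filter (fun i => z i ≠ 0) with hS
  have hSmem : ∀ i, i ∈ S ↔ z i ≠ 0 := fun i => by simp [hS]
  have h0 : (0 : Fin p → ℝ) ∈ convexHull ℝ (A '' ↑S) := by
    have h1 : ∑ i ∈ S, Complex.normSq (z i) = 1 := by
      rw [← hz1]
      apply Finset.sum_subset (Finset.subset_univ S)
      intro i _ hi
      rw [hSmem] at hi; push_neg at hi
      simp [hi]
    have h2 : ∑ i ∈ S, Complex.normSq (z i) • A i = 0 := by
      rw [← hz0]
      apply Finset.sum_subset (Finset.subset_univ S)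
      intro i _ hi
      rw [hSmem] at hi; push_neg at hi
      simp [hi]
    exact zero_mem_hull_of_weights A S _ (fun i _ => Complex.normSq_nonneg (z i)) h1 h2
  rw [convexHull_eq_union] at h0
  simp only [Set.mem_iUnion] at h0
  obtain ⟨T, hTsub, hTai, h0T⟩ := h0
  have hch : ∀ y : T, ∃ i, i ∈ (S : Set (Fin n)) ∧ A i = (y : Fin p → ℝ) := fun y => hTsub y.2
  set φ : T → Fin n := fun y => (hch y).choose with hφ
  have hφS : ∀ y : T, φ y ∈ S := fun y => (hch y).choose_spec.1
  have hφA : ∀ y : T, A (φ y) = (y : Fin p → ℝ) := fun y => (hch y).choose_spec.2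
  set J : Finset (Fin n) := Finset.univ.image φ with hJ
  have hTJ : (T : Set (Fin p → ℝ)) ⊆ A '' ↑J := by
    intro y hy
    exact ⟨φ ⟨y, hy⟩, by simp [hJ], hφA ⟨y, hy⟩⟩
  have hpJ : p < J.card := hW J (convexHull_mono hTJ h0T)
  have hJT : J.card ≤ T.card := le_trans Finset.card_image_le (by simp)
  have hpT : p < T.card := lt_of_lt_of_le hpJ hJT
  have li := snoc_linearIndependent T hTai
  have hTle : T.card ≤ p + 1 := by
    have := li.fintype_card_le_finrank
    simpa [Module.finrank_fin_fun] using this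
  have hTcard : T.card = p + 1 := le_antisymm hTle hpT
  have hrank : Module.finrank ℝ (Submodule.span ℝ
      (Set.range (fun y : T => (Fin.snoc (y : Fin p → ℝ) (1:ℝ) : Fin (p+1) → ℝ)))) = p + 1 := by
    rw [finrank_span_eq_card li]
    simpa using hTcard
  have hsub : Set.range (fun y : T => (Fin.snoc (y : Fin p → ℝ) (1:ℝ) : Fin (p+1) → ℝ)) ⊆
      (fun i => (Fin.snoc (A i) (1 : ℝ) : Fin (p+1) → ℝ)) '' {i | z i ≠ 0} := by
    rintro x ⟨y, rfl⟩
    exact ⟨φ y, (hSmem (φ y)).1 (hφS y), by simp only []; rw [hφA y]⟩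
  have hmono := Submodule.finrank_mono (Submodule.span_mono (R := ℝ) hsub)
  rw [hrank] at hmono
  refine le_antisymm ?_ hmono
  have := Submodule.finrank_le (Submodule.span ℝ
    ((fun i => (Fin.snoc (A i) (1 : ℝ) : Fin (p+1) → ℝ)) '' {i | z i ≠ 0}))
  simpa [Module.finrank_fin_fun] using this

/-- the system defines a nonempty set which is nondegenerate at every
solution point iff the Siegel and weak hyperbolicity conditions hold. -/
theorem statement0 {n p : ℕ} (hn : 1 ≤ n) (A : Fin n → (Fin p → ℝ)) :
    ((linkSet A).Nonempty ∧ ∀ z ∈ linkSet A, NondegAt A z) ↔ (Siegel A ∧ WeakHyp A) := by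
  classical
  have : Nonempty (Fin n) := ⟨⟨0, hn⟩⟩
  constructor
  · rintro ⟨⟨z, hz⟩, hnd⟩
    constructor
    · -- Siegel
      have h0 := zero_mem_hull_of_weights A Finset.univ (fun i => Complex.normSq (z i))
        (fun i _ => Complex.normSq_nonneg (z i)) hz.2 hz.1
      rwa [Finset.coe_univ, Set.image_univ] at h0
    · -- WeakHyp
      intro I hI
      obtain ⟨w, hw0, hw1, hwA, hwI⟩ := exists_weights_of_mem_hull A I hI
      obtain ⟨hmem, hsupp⟩ := sqrt_weights_mem_link A w hw0 hw1 hwA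
      have hfin := hnd _ hmem
      set z' : Fin n → ℂ := fun i => ((Real.sqrt (w i) : ℝ) : ℂ) with hz'
      have hsub : (fun i => (Fin.snoc (A i) (1 : ℝ) : Fin (p+1) → ℝ)) '' {i | z' i ≠ 0} ⊆
          ↑(I.image (fun i => (Fin.snoc (A i) (1 : ℝ) : Fin (p+1) → ℝ))) := by
        rintro x ⟨i, hi, rfl⟩
        exact Finset.mem_coe.2 (Finset.mem_image_of_mem _ (hwI i ((hsupp i).1 hi)))
      have hle := Submodule.finrank_mono (Submodule.span_mono (R := ℝ) hsub)
      rw [hfin] at hle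
      have hle2 := finrank_span_finset_le_card
        (R := ℝ) (I.image (fun i => (Fin.snoc (A i) (1 : ℝ) : Fin (p+1) → ℝ)))
      have : p + 1 ≤ I.card :=
        le_trans (le_trans hle hle2) Finset.card_image_le
      omega
  · rintro ⟨hS, hW⟩
    have hS' : (0 : Fin p → ℝ) ∈ convexHull ℝ (A '' ↑(Finset.univ : Finset (Fin n))) := by
      rwa [Finset.coe_univ, Set.image_univ]
    obtain ⟨w, hw0, hw1, hwA, _⟩ := exists_weights_of_mem_hull A Finset.univ hS'
    obtain ⟨hmem, _⟩ := sqrt_weights_mem_link A w hw0 hw1 hwA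
    exact ⟨⟨_, hmem⟩, fun z hz => nondeg_of_weakHyp A hW z hz⟩
end

section
/- Suppose 0 lies in the convex hull of vectors A_{j_1}, ..., A_{j_{p+1}} in ℝ^p, and suppose that 0 does not lie in the convex hull of any p of these vectors. Then the matrix with columns (A_{j_1},1), ..., (A_{j_{p+1}},1) in ℝ^{p+1} has rank p+1. -/
/-!
By Carathéodory, `0` is a convex combination of an affinely independent subfamily of the `v k`;
minimality forces this subfamily to be all of `v`, so `v` is affinely independent. Affine
independence of `v` is exactly linear independence of the lifted vectors `(v k, 1)`: a linear
relation among them is a relation `∑ c k • v k = 0` with `∑ c k = 0`.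
-/

open Set

theorem affineIndependent_of_mem_convexHull_of_notMem_convexHull_compl
    {ι 𝕜 E : Type*} [Fintype ι] [Field 𝕜] [LinearOrder 𝕜] [IsStrictOrderedRing 𝕜]
    [AddCommGroup E] [Module 𝕜 E] {v : ι → E} {x : E}
    (hx : x ∈ convexHull 𝕜 (range v)) (hmin : ∀ i, x ∉ convexHull 𝕜 (v '' {i}ᶜ)) :
    AffineIndependent 𝕜 v := by
  classical
  obtain ⟨t, hts, hti, hxt⟩ : ∃ t : Finset E, ↑t ⊆ range v ∧
      AffineIndependent 𝕜 ((↑) : t → E) ∧ x ∈ convexHull 𝕜 ↑t := by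
    rw [convexHull_eq_union] at hx
    simpa only [mem_iUnion, exists_prop] using hx
  have range_eq : range v = ↑t := by
    refine hts.antisymm' ?_
    rintro _ ⟨i, rfl⟩
    by_contra hi
    refine hmin i (convexHull_mono (fun y hy => ?_) hxt)
    obtain ⟨j, rfl⟩ := hts hy
    exact ⟨j, fun hji => hi (hji ▸ hy), rfl⟩
  have injective : Function.Injective v := by
    intro i j hij
    by_contra hne
    refine hmin i (convexHull_mono ?_ hx)
    rintro _ ⟨k, rfl⟩
    by_cases hk : k = i
    · exact ⟨j, Ne.symm hne, hk ▸ hij.symm⟩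
    · exact ⟨k, hk, rfl⟩
  refine AffineIndependent.of_set_of_injective ?_ injective
  rw [range_eq]
  exact hti

theorem AffineIndependent.linearIndependent_snoc_one {ι 𝕜 : Type*} [Fintype ι] [Field 𝕜]
    {n : ℕ} {v : ι → Fin n → 𝕜} (hv : AffineIndependent 𝕜 v) :
    LinearIndependent 𝕜 fun i => (Fin.snoc (v i) 1 : Fin (n + 1) → 𝕜) := by
  rw [Fintype.linearIndependent_iff]
  intro c hc
  have sum_eq_zero : ∑ i, c i = 0 := by
    simpa [Finset.sum_apply] using congrFun hc (Fin.last n)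
  have combination_eq_zero : ∑ i, c i • v i = 0 := by
    ext j
    simpa [Finset.sum_apply] using congrFun hc j.castSucc
  exact fun i => hv.eq_zero_of_sum_eq_zero sum_eq_zero combination_eq_zero i (Finset.mem_univ i)

/-- if `0` is in the convex hull of `p+1` vectors of `ℝ^p` but not in
the convex hull of any `p` of them, then the matrix whose columns are the vectors
`(A_{j_k}, 1) ∈ ℝ^{p+1}` has rank `p+1`. -/
theorem statement1 {p : ℕ} (v : Fin (p + 1) → (Fin p → ℝ))
    (h0 : (0 : Fin p → ℝ) ∈ convexHull ℝ (Set.range v))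
    (h1 : ∀ s : Finset (Fin (p + 1)), s.card = p →
      (0 : Fin p → ℝ) ∉ convexHull ℝ (v '' ↑s)) :
    Matrix.rank (Matrix.of fun (j : Fin (p + 1)) (k : Fin (p + 1)) =>
      (Fin.snoc (v k) (1 : ℝ) : Fin (p + 1) → ℝ) j) = p + 1 := by
  have hv : AffineIndependent ℝ v := by
    refine affineIndependent_of_mem_convexHull_of_notMem_convexHull_compl h0 fun i => ?_
    simpa [Finset.coe_erase, Set.compl_eq_univ_sdiff] using h1 (Finset.univ.erase i) (by simp)
  rw [← Matrix.rank_transpose]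
  exact hv.linearIndependent_snoc_one.rank_matrix.trans (Fintype.card_fin _)
end

section
/- Let A and B be admissible configurations of dimensions (n,p) and (n',p') respectively, and define the configuration C ∈ M_{(n+n'),(p+p'+1)}(ℝ) in block form with first n columns (A_i, 0, -1) ∈ ℝ^{p} × ℝ^{p'} × ℝ and last n' columns (0, B_j, 1). Then C is admissible, and the link X_C is diffeomorphic to the product X_A × X_B. -/
open Set

/-- Admissibility of a configuration. -/
def Admissible {n p : ℕ} (A : Fin n → (Fin p → ℝ)) : Prop := Siegel A ∧ WeakHyp A

/-- `f` restricts to a diffeomorphism from `s` onto `t`: it is a bijection of `s` onto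
`t`, smooth on an open neighborhood of `s`, with a smooth local inverse. -/
def IsDiffeoOn {E F : Type*} [NormedAddCommGroup E] [NormedSpace ℝ E]
    [NormedAddCommGroup F] [NormedSpace ℝ F] (f : E → F) (s : Set E) (t : Set F) : Prop :=
  Set.BijOn f s t ∧
  (∃ U, IsOpen U ∧ s ⊆ U ∧ ContDiffOn ℝ (⊤ : ℕ∞) f U) ∧
  (∃ g V, IsOpen V ∧ t ⊆ V ∧ ContDiffOn ℝ (⊤ : ℕ∞) g V ∧ Set.EqOn (g ∘ f) id s)

/-- The product configuration `C` built from `A` and `B`: the first `n` columns are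
`(Aᵢ, 0, -1)` and the last `n'` columns are `(0, B_j, 1)`. -/
def prodConfig {n n' p p' : ℕ} (A : Fin n → (Fin p → ℝ)) (B : Fin n' → (Fin p' → ℝ)) :
    Fin (n + n') → (Fin (p + p' + 1) → ℝ) :=
  Fin.append
    (fun i => (Fin.snoc (Fin.append (A i) (0 : Fin p' → ℝ)) (-1 : ℝ) : Fin (p + p' + 1) → ℝ))
    (fun j => (Fin.snoc (Fin.append (0 : Fin p → ℝ) (B j)) (1 : ℝ) : Fin (p + p' + 1) → ℝ))

section Aux
open Finset

lemma snoc_append_add {p p' : ℕ} (x : Fin p → ℝ) (y : Fin p' → ℝ) (a b : ℝ) :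
    (Fin.snoc (Fin.append x (0 : Fin p' → ℝ)) a : Fin (p+p'+1) → ℝ) + Fin.snoc (Fin.append (0 : Fin p → ℝ) y) b
      = Fin.snoc (Fin.append x y) (a+b) := by
  funext m
  refine Fin.lastCases ?_ (fun m' => ?_) m
  · simp
  · refine Fin.addCases (fun k => ?_) (fun k => ?_) m' <;>
      simp [Fin.append_left, Fin.append_right, -Fin.castSucc_natAdd]

lemma sum_snoc_left {p p' : ℕ} {κ : Type*} (s : Finset κ) (t : κ → ℝ) (v : κ → Fin p → ℝ) :
    ∑ i ∈ s, t i • (Fin.snoc (Fin.append (v i) (0 : Fin p' → ℝ)) (-1 : ℝ) : Fin (p+p'+1) → ℝ)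
      = Fin.snoc (Fin.append (∑ i ∈ s, t i • v i) (0 : Fin p' → ℝ)) (-(∑ i ∈ s, t i)) := by
  funext m
  rw [Finset.sum_apply]
  refine Fin.lastCases ?_ (fun m' => ?_) m
  · simp [Fin.snoc_last, Finset.sum_neg_distrib]
  · refine Fin.addCases (fun k => ?_) (fun k => ?_) m' <;>
      simp [Fin.snoc_castSucc, Fin.append_left, Fin.append_right, Finset.sum_apply, -Fin.castSucc_natAdd]

lemma sum_snoc_right {p p' : ℕ} {κ : Type*} (s : Finset κ) (t : κ → ℝ) (v : κ → Fin p' → ℝ) :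
    ∑ i ∈ s, t i • (Fin.snoc (Fin.append (0 : Fin p → ℝ) (v i)) (1 : ℝ) : Fin (p+p'+1) → ℝ)
      = Fin.snoc (Fin.append (0 : Fin p → ℝ) (∑ i ∈ s, t i • v i)) (∑ i ∈ s, t i) := by
  funext m
  rw [Finset.sum_apply]
  refine Fin.lastCases ?_ (fun m' => ?_) m
  · simp [Fin.snoc_last]
  · refine Fin.addCases (fun k => ?_) (fun k => ?_) m' <;>
      simp [Fin.snoc_castSucc, Fin.append_left, Fin.append_right, Finset.sum_apply, -Fin.castSucc_natAdd]

lemma snoc_append_eq_zero {p p' : ℕ} {x : Fin p → ℝ} {y : Fin p' → ℝ} {a : ℝ}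
    (h : (Fin.snoc (Fin.append x y) a : Fin (p+p'+1) → ℝ) = 0) : x = 0 ∧ y = 0 ∧ a = 0 := by
  refine ⟨funext fun k => ?_, funext fun k => ?_, ?_⟩
  · have := congrFun h (Fin.castSucc (Fin.castAdd p' k))
    simpa [Fin.snoc_castSucc, Fin.append_left] using this
  · have := congrFun h (Fin.castSucc (Fin.natAdd p k))
    simpa [Fin.snoc_castSucc, Fin.append_right, -Fin.castSucc_natAdd] using this
  · have := congrFun h (Fin.last (p+p'))
    simpa [Fin.snoc_last] using this

lemma snoc_zero_iff {p p' : ℕ} {x : Fin p → ℝ} {y : Fin p' → ℝ} {a : ℝ} :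
    (Fin.snoc (Fin.append x y) a : Fin (p+p'+1) → ℝ) = 0 ↔ x = 0 ∧ y = 0 ∧ a = 0 := by
  constructor
  · exact snoc_append_eq_zero
  · rintro ⟨rfl, rfl, rfl⟩
    funext m
    refine Fin.lastCases ?_ (fun m' => ?_) m
    · simp
    · refine Fin.addCases (fun k => ?_) (fun k => ?_) m' <;> simp [Fin.append_left, Fin.append_right, -Fin.castSucc_natAdd]

section Cfg
open Set
variable {n n' p p' : ℕ} (A : Fin n → (Fin p → ℝ)) (B : Fin n' → (Fin p' → ℝ))

lemma prodConfig_left (i : Fin n) :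
    prodConfig A B (Fin.castAdd n' i)
      = Fin.snoc (Fin.append (A i) (0 : Fin p' → ℝ)) (-1 : ℝ) := by
  simp [prodConfig, Fin.append_left]

lemma prodConfig_right (j : Fin n') :
    prodConfig A B (Fin.natAdd n j)
      = Fin.snoc (Fin.append (0 : Fin p → ℝ) (B j)) (1 : ℝ) := by
  simp [prodConfig, Fin.append_right]

lemma sum_prodConfig (t1 : Fin n → ℝ) (t2 : Fin n' → ℝ) :
    (∑ i, t1 i • prodConfig A B (Fin.castAdd n' i))
      + ∑ j, t2 j • prodConfig A B (Fin.natAdd n j)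
      = Fin.snoc (Fin.append (∑ i, t1 i • A i) (∑ j, t2 j • B j))
          ((∑ j, t2 j) - ∑ i, t1 i) := by
  simp only [prodConfig_left, prodConfig_right]
  rw [sum_snoc_left, sum_snoc_right, snoc_append_add]
  congr 1
  ring

lemma mem_linkC_iff (u : Fin (n + n') → ℂ) :
    u ∈ linkSet (prodConfig A B) ↔
      (∑ i, Complex.normSq (u (Fin.castAdd n' i)) • A i = 0) ∧
      (∑ j, Complex.normSq (u (Fin.natAdd n j)) • B j = 0) ∧
      (∑ i, Complex.normSq (u (Fin.castAdd n' i)) = 1/2) ∧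
      (∑ j, Complex.normSq (u (Fin.natAdd n j)) = 1/2) := by
  have hsplit : ∑ k, Complex.normSq (u k) • prodConfig A B k
      = (∑ i, Complex.normSq (u (Fin.castAdd n' i)) • prodConfig A B (Fin.castAdd n' i))
        + ∑ j, Complex.normSq (u (Fin.natAdd n j)) • prodConfig A B (Fin.natAdd n j) :=
    Fin.sum_univ_add _
  have hsplit2 : ∑ k, Complex.normSq (u k)
      = (∑ i, Complex.normSq (u (Fin.castAdd n' i)))
        + ∑ j, Complex.normSq (u (Fin.natAdd n j)) := Fin.sum_univ_add _
  constructor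
  · rintro ⟨h1, h2⟩
    rw [hsplit] at h1
    rw [sum_prodConfig] at h1
    obtain ⟨hx, hy, hc⟩ := snoc_append_eq_zero h1
    rw [hsplit2] at h2
    have h3 := sub_eq_zero.mp hc
    exact ⟨hx, hy, by linarith, by linarith⟩
  · rintro ⟨hx, hy, ha, hb⟩
    constructor
    · rw [hsplit, sum_prodConfig, snoc_zero_iff]
      exact ⟨hx, hy, by rw [ha, hb]; ring⟩
    · rw [hsplit2, ha, hb]; norm_num

open Classical in
lemma exists_weights_of_mem_convexHull_range {ι : Type*} {q : ℕ} (D : ι → Fin q → ℝ)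
    (h : (0 : Fin q → ℝ) ∈ convexHull ℝ (Set.range D)) :
    ∃ (s : Finset ι) (w : ι → ℝ), (∀ i ∈ s, 0 ≤ w i) ∧ (∑ i ∈ s, w i = 1) ∧
      ∑ i ∈ s, w i • D i = 0 := by
  rw [convexHull_range_eq_exists_affineCombination] at h
  obtain ⟨s, w, hw0, hw1, hx⟩ := h
  refine ⟨s, w, hw0, hw1, ?_⟩
  rw [affineCombination_eq_centerMass hw1, Finset.centerMass_eq_of_sum_1 _ _ hw1] at hx
  exact hx

def PA (n' : ℕ) {p p' : ℕ} : ((Fin (p + p' + 1) → ℝ)) →ₗ[ℝ] (Fin p → ℝ) :=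
  LinearMap.funLeft ℝ ℝ (fun k => Fin.castSucc (Fin.castAdd p' k))

def PB (n : ℕ) {p p' : ℕ} : ((Fin (p + p' + 1) → ℝ)) →ₗ[ℝ] (Fin p' → ℝ) :=
  LinearMap.funLeft ℝ ℝ (fun k => Fin.castSucc (Fin.natAdd p k))

lemma PA_left (i : Fin n) : PA n' (prodConfig A B (Fin.castAdd n' i)) = A i := by
  funext k
  simp [PA, LinearMap.funLeft_apply, prodConfig_left, Fin.snoc_castSucc, Fin.append_left]

lemma PA_right (j : Fin n') : PA n' (prodConfig A B (Fin.natAdd n j)) = 0 := by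
  funext k
  simp [PA, LinearMap.funLeft_apply, prodConfig_right, Fin.snoc_castSucc, Fin.append_left]

lemma PB_left (i : Fin n) : PB n (prodConfig A B (Fin.castAdd n' i)) = 0 := by
  funext k
  simp [PB, LinearMap.funLeft_apply, prodConfig_left, Fin.snoc_castSucc, Fin.append_right, -Fin.castSucc_natAdd]

lemma PB_right (j : Fin n') : PB n (prodConfig A B (Fin.natAdd n j)) = B j := by
  funext k
  simp [PB, LinearMap.funLeft_apply, prodConfig_right, Fin.snoc_castSucc, Fin.append_right, -Fin.castSucc_natAdd]

lemma last_left (i : Fin n) : prodConfig A B (Fin.castAdd n' i) (Fin.last (p + p')) = -1 := by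
  simp [prodConfig_left, Fin.snoc_last]

lemma last_right (j : Fin n') : prodConfig A B (Fin.natAdd n j) (Fin.last (p + p')) = 1 := by
  simp [prodConfig_right, Fin.snoc_last]

lemma siegel_prod (hA : Siegel A) (hB : Siegel B) : Siegel (prodConfig A B) := by
  obtain ⟨s1, w1, hw10, hw11, hs1⟩ := exists_weights_of_mem_convexHull_range A hA
  obtain ⟨s2, w2, hw20, hw21, hs2⟩ := exists_weights_of_mem_convexHull_range B hB
  set t : Finset (Fin n ⊕ Fin n') := s1.disjSum s2 with ht
  set W : Fin n ⊕ Fin n' → ℝ := Sum.elim (fun i => w1 i / 2) (fun j => w2 j / 2) with hW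
  set Z : Fin n ⊕ Fin n' → (Fin (p + p' + 1) → ℝ) :=
    Sum.elim (fun i => prodConfig A B (Fin.castAdd n' i))
      (fun j => prodConfig A B (Fin.natAdd n j)) with hZ
  have hW1 : ∑ x ∈ t, W x = 1 := by
    rw [ht, Finset.sum_disjSum]
    simp only [hW, Sum.elim_inl, Sum.elim_inr]
    rw [← Finset.sum_div, ← Finset.sum_div, hw11, hw21]
    norm_num
  have hcm : t.centerMass W Z = 0 := by
    rw [Finset.centerMass_eq_of_sum_1 _ _ hW1, ht, Finset.sum_disjSum]
    simp only [hW, hZ, Sum.elim_inl, Sum.elim_inr, prodConfig_left, prodConfig_right]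
    rw [sum_snoc_left, sum_snoc_right, snoc_append_add, snoc_zero_iff]
    have e1 : ∑ i ∈ s1, (w1 i / 2) • A i = (2:ℝ)⁻¹ • ∑ i ∈ s1, w1 i • A i := by
      rw [Finset.smul_sum]
      refine Finset.sum_congr rfl fun i _ => ?_
      rw [smul_smul]
      congr 1
      ring
    have e2 : ∑ j ∈ s2, (w2 j / 2) • B j = (2:ℝ)⁻¹ • ∑ j ∈ s2, w2 j • B j := by
      rw [Finset.smul_sum]
      refine Finset.sum_congr rfl fun j _ => ?_
      rw [smul_smul]
      congr 1
      ring
    rw [← Finset.sum_div, ← Finset.sum_div, hw11, hw21]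
    refine ⟨by rw [e1, hs1, smul_zero], by rw [e2, hs2, smul_zero], by ring⟩
  have := Finset.centerMass_mem_convexHull (s := Set.range (prodConfig A B)) t
    (w := W) (z := Z) ?_ (by rw [hW1]; norm_num) ?_
  · rwa [hcm] at this
  · rintro (i | j) _ <;> simp only [hW, Sum.elim_inl, Sum.elim_inr] <;>
      [exact div_nonneg (hw10 _ (by simpa [ht] using ‹Sum.inl i ∈ t›)) (by norm_num);
       exact div_nonneg (hw20 _ (by simpa [ht] using ‹Sum.inr j ∈ t›)) (by norm_num)]
  · rintro (i | j) _ <;> exact ⟨_, rfl⟩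

lemma fin_left_eq (k : Fin (n + n')) (h : (k : ℕ) < n) : k = Fin.castAdd n' ⟨(k : ℕ), h⟩ :=
  Fin.ext rfl

lemma fin_right_eq (k : Fin (n + n')) (h : ¬ (k : ℕ) < n) :
    k = Fin.natAdd n ⟨(k : ℕ) - n, by omega⟩ := by
  have := k.isLt
  exact Fin.ext (by simp [Fin.natAdd]; omega)

open Classical in
lemma weakHyp_prod (hA : WeakHyp A) (hB : WeakHyp B) : WeakHyp (prodConfig A B) := by
  intro I h0
  set C := prodConfig A B with hC
  rw [Set.image_eq_range] at h0
  obtain ⟨s, w, hw0, hw1, hsum⟩ := exists_weights_of_mem_convexHull_range _ h0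
  set s1 := s.filter (fun k => k.1.1 < n) with hs1
  set s2 := s.filter (fun k => ¬ k.1.1 < n) with hs2
  have hWsplit : ∑ k ∈ s1, w k + ∑ k ∈ s2, w k = 1 := by
    rw [hs1, hs2, Finset.sum_filter_add_sum_filter_not, hw1]
  have hhalf : (∑ k ∈ s1, w k) = 1/2 ∧ (∑ k ∈ s2, w k) = 1/2 := by
    have h := congrFun hsum (Fin.last (p + p'))
    rw [Finset.sum_apply] at h
    simp only [Pi.smul_apply, smul_eq_mul, Pi.zero_apply] at h
    rw [← Finset.sum_filter_add_sum_filter_not s (fun k => k.1.1 < n)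
      (fun k => w k * C (↑k) (Fin.last (p+p')))] at h
    have e1 : ∑ k ∈ s1, w k * C (↑k) (Fin.last (p+p')) = -∑ k ∈ s1, w k := by
      rw [← Finset.sum_neg_distrib]
      refine Finset.sum_congr rfl fun k hk => ?_
      have hkn : k.1.1 < n := (Finset.mem_filter.mp hk).2
      rw [hC, fin_left_eq _ hkn, last_left]
      ring
    have e2 : ∑ k ∈ s2, w k * C (↑k) (Fin.last (p+p')) = ∑ k ∈ s2, w k := by
      refine Finset.sum_congr rfl fun k hk => ?_
      have hkn : ¬ k.1.1 < n := (Finset.mem_filter.mp hk).2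
      rw [hC, fin_right_eq _ hkn, last_right]
      ring
    rw [e1, e2] at h
    constructor <;> linarith
  -- the A side
  have hApart : ∑ k ∈ s1, w k • (PA n' (C ↑k)) = 0 := by
    have h := congrArg (PA n') hsum
    rw [map_sum, map_zero] at h
    simp only [map_smul] at h
    rw [← Finset.sum_filter_add_sum_filter_not s (fun k => k.1.1 < n)
      (fun k => w k • PA n' (C ↑k))] at h
    have e2 : ∑ k ∈ s2, w k • PA n' (C ↑k) = 0 := by
      refine Finset.sum_eq_zero fun k hk => ?_
      have hkn : ¬ k.1.1 < n := (Finset.mem_filter.mp hk).2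
      rw [hC, fin_right_eq _ hkn, PA_right, smul_zero]
    rw [e2, add_zero] at h
    exact h
  have hBpart : ∑ k ∈ s2, w k • (PB n (C ↑k)) = 0 := by
    have h := congrArg (PB n) hsum
    rw [map_sum, map_zero] at h
    simp only [map_smul] at h
    rw [← Finset.sum_filter_add_sum_filter_not s (fun k => k.1.1 < n)
      (fun k => w k • PB n (C ↑k))] at h
    have e1 : ∑ k ∈ s1, w k • PB n (C ↑k) = 0 := by
      refine Finset.sum_eq_zero fun k hk => ?_
      have hkn : k.1.1 < n := (Finset.mem_filter.mp hk).2
      rw [hC, fin_left_eq _ hkn, PB_left, smul_zero]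
    rw [e1, zero_add] at h
    exact h
  set IA := Finset.univ.filter (fun i : Fin n => Fin.castAdd n' i ∈ I) with hIA
  set IB := Finset.univ.filter (fun j : Fin n' => Fin.natAdd n j ∈ I) with hIB
  have hA0 : (0 : Fin p → ℝ) ∈ convexHull ℝ (A '' ↑IA) := by
    have hm := Finset.centerMass_mem_convexHull (s := A '' ↑IA) s1 (w := w)
      (z := fun k => PA n' (C ↑k)) (fun k hk => hw0 k (Finset.mem_filter.mp hk).1)
      (by rw [hhalf.1]; norm_num) ?_
    · have : s1.centerMass w (fun k => PA n' (C ↑k)) = 0 := by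
        simp only [Finset.centerMass, hApart, smul_zero]
      rwa [this] at hm
    · intro k hk
      have hkn : k.1.1 < n := (Finset.mem_filter.mp hk).2
      refine ⟨⟨k.1.1, hkn⟩, ?_, ?_⟩
      · refine Finset.mem_coe.mpr (Finset.mem_filter.mpr ⟨Finset.mem_univ _, ?_⟩)
        rw [← fin_left_eq _ hkn]
        exact Finset.mem_coe.mp k.2
      · show A ⟨k.1.1, hkn⟩ = PA n' (C ↑k)
        rw [hC]
        conv_rhs => rw [fin_left_eq (k : Fin (n+n')) hkn]
        rw [PA_left]
  have hB0 : (0 : Fin p' → ℝ) ∈ convexHull ℝ (B '' ↑IB) := by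
    have hm := Finset.centerMass_mem_convexHull (s := B '' ↑IB) s2 (w := w)
      (z := fun k => PB n (C ↑k)) (fun k hk => hw0 k (Finset.mem_filter.mp hk).1)
      (by rw [hhalf.2]; norm_num) ?_
    · have : s2.centerMass w (fun k => PB n (C ↑k)) = 0 := by
        simp only [Finset.centerMass, hBpart, smul_zero]
      rwa [this] at hm
    · intro k hk
      have hkn : ¬ k.1.1 < n := (Finset.mem_filter.mp hk).2
      refine ⟨⟨k.1.1 - n, by have := k.1.isLt; omega⟩, ?_, ?_⟩
      · refine Finset.mem_coe.mpr (Finset.mem_filter.mpr ⟨Finset.mem_univ _, ?_⟩)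
        rw [← fin_right_eq _ hkn]
        exact Finset.mem_coe.mp k.2
      · show B ⟨k.1.1 - n, _⟩ = PB n (C ↑k)
        rw [hC]
        conv_rhs => rw [fin_right_eq (k : Fin (n+n')) hkn]
        rw [PB_right]
  have hcardA : p < IA.card := hA IA hA0
  have hcardB : p' < IB.card := hB IB hB0
  -- cardinality bookkeeping
  have hIAcard : IA.card = (I.filter (fun k => k.1 < n)).card := by
    refine Finset.card_bij (fun i _ => Fin.castAdd n' i) ?_ ?_ ?_
    · intro i hi
      refine Finset.mem_filter.mpr ⟨(Finset.mem_filter.mp hi).2, ?_⟩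
      simp
    · intro a _ b _ hab
      exact Fin.castAdd_injective _ _ hab
    · intro k hk
      obtain ⟨hkI, hkn⟩ := Finset.mem_filter.mp hk
      refine ⟨⟨k.1, hkn⟩, ?_, ?_⟩
      · refine Finset.mem_filter.mpr ⟨Finset.mem_univ _, ?_⟩
        rw [← fin_left_eq _ hkn]
        exact hkI
      · exact (fin_left_eq _ hkn).symm
  have hIBcard : IB.card = (I.filter (fun k => ¬ k.1 < n)).card := by
    refine Finset.card_bij (fun j _ => Fin.natAdd n j) ?_ ?_ ?_
    · intro j hj
      refine Finset.mem_filter.mpr ⟨(Finset.mem_filter.mp hj).2, ?_⟩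
      simp
    · intro a _ b _ hab
      have h' := congrArg Fin.val hab
      simp only [Fin.coe_natAdd] at h'
      exact Fin.ext (by omega)
    · intro k hk
      obtain ⟨hkI, hkn⟩ := Finset.mem_filter.mp hk
      refine ⟨⟨k.1 - n, by have := k.isLt; omega⟩, ?_, ?_⟩
      · refine Finset.mem_filter.mpr ⟨Finset.mem_univ _, ?_⟩
        rw [← fin_right_eq _ hkn]
        exact hkI
      · exact (fin_right_eq _ hkn).symm
  have hItotal : (I.filter (fun k => k.1 < n)).card
      + (I.filter (fun k => ¬ k.1 < n)).card = I.card :=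
    Finset.card_filter_add_card_filter_not _
  omega

lemma normSq_sqrt2_smul (z : ℂ) :
    Complex.normSq ((Real.sqrt 2 : ℝ) • z) = 2 * Complex.normSq z := by
  rw [Complex.real_smul, Complex.normSq_mul, Complex.normSq_ofReal,
    Real.mul_self_sqrt (by norm_num)]

lemma normSq_invsqrt2_smul (z : ℂ) :
    Complex.normSq (((Real.sqrt 2)⁻¹ : ℝ) • z) = Complex.normSq z / 2 := by
  rw [Complex.real_smul, Complex.normSq_mul, Complex.normSq_ofReal, ← mul_inv,
    Real.mul_self_sqrt (by norm_num)]
  ring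

lemma sqrt2_ne_zero : (Real.sqrt 2 : ℝ) ≠ 0 := by
  positivity

lemma diffeo_part :
    ∃ f : (Fin (n + n') → ℂ) → (Fin n → ℂ) × (Fin n' → ℂ),
      Set.BijOn f (linkSet (prodConfig A B)) ((linkSet A) ×ˢ (linkSet B)) ∧
      (∃ U, IsOpen U ∧ linkSet (prodConfig A B) ⊆ U ∧ ContDiffOn ℝ (⊤ : ℕ∞) f U) ∧
      (∃ g V, IsOpen V ∧ (linkSet A) ×ˢ (linkSet B) ⊆ V ∧ ContDiffOn ℝ (⊤ : ℕ∞) g V ∧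
        Set.EqOn (g ∘ f) id (linkSet (prodConfig A B))) := by
  set r : ℝ := Real.sqrt 2 with hr
  set f : (Fin (n + n') → ℂ) → (Fin n → ℂ) × (Fin n' → ℂ) :=
    fun u => (fun i => r • u (Fin.castAdd n' i), fun j => r • u (Fin.natAdd n j)) with hf
  set g : (Fin n → ℂ) × (Fin n' → ℂ) → (Fin (n + n') → ℂ) :=
    fun zw => Fin.append (fun i => r⁻¹ • zw.1 i) (fun j => r⁻¹ • zw.2 j) with hg
  have hgf : ∀ u, g (f u) = u := by
    intro u
    funext k
    refine Fin.addCases (fun i => ?_) (fun j => ?_) k <;>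
      simp only [hg, hf, Fin.append_left, Fin.append_right, smul_smul,
        inv_mul_cancel₀ (by rw [hr]; exact sqrt2_ne_zero : r ≠ 0), one_smul]
  have hfg : ∀ zw, f (g zw) = zw := by
    intro zw
    refine Prod.ext ?_ ?_ <;> funext i <;>
      simp only [hf, hg, Fin.append_left, Fin.append_right, smul_smul,
        mul_inv_cancel₀ (by rw [hr]; exact sqrt2_ne_zero : r ≠ 0), one_smul]
  refine ⟨f, ⟨?_, ?_, ?_⟩, ?_, ?_⟩
  · -- MapsTo
    intro u hu
    rw [mem_linkC_iff] at hu
    obtain ⟨h1, h2, h3, h4⟩ := hu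
    constructor
    · constructor
      · have : ∑ i, Complex.normSq (r • u (Fin.castAdd n' i)) • A i
            = (2:ℝ) • ∑ i, Complex.normSq (u (Fin.castAdd n' i)) • A i := by
          rw [Finset.smul_sum]
          refine Finset.sum_congr rfl fun i _ => ?_
          rw [hr, normSq_sqrt2_smul, smul_smul]
        rw [hf]
        simp only
        rw [this, h1, smul_zero]
      · have : ∑ i, Complex.normSq (r • u (Fin.castAdd n' i))
            = 2 * ∑ i, Complex.normSq (u (Fin.castAdd n' i)) := by
          rw [Finset.mul_sum]
          exact Finset.sum_congr rfl fun i _ => by rw [hr, normSq_sqrt2_smul]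
        rw [hf]
        simp only
        rw [this, h3]
        norm_num
    · constructor
      · have : ∑ j, Complex.normSq (r • u (Fin.natAdd n j)) • B j
            = (2:ℝ) • ∑ j, Complex.normSq (u (Fin.natAdd n j)) • B j := by
          rw [Finset.smul_sum]
          refine Finset.sum_congr rfl fun j _ => ?_
          rw [hr, normSq_sqrt2_smul, smul_smul]
        rw [hf]
        simp only
        rw [this, h2, smul_zero]
      · have : ∑ j, Complex.normSq (r • u (Fin.natAdd n j))
            = 2 * ∑ j, Complex.normSq (u (Fin.natAdd n j)) := by
          rw [Finset.mul_sum]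
          exact Finset.sum_congr rfl fun j _ => by rw [hr, normSq_sqrt2_smul]
        rw [hf]
        simp only
        rw [this, h4]
        norm_num
  · -- InjOn
    intro u _ v _ huv
    have := congrArg g huv
    rwa [hgf, hgf] at this
  · -- SurjOn
    intro zw hzw
    refine ⟨g zw, ?_, hfg zw⟩
    obtain ⟨⟨hz1, hz2⟩, hw1, hw2⟩ := hzw
    rw [mem_linkC_iff]
    have e1 : ∀ i, (g zw) (Fin.castAdd n' i) = r⁻¹ • zw.1 i := fun i => by
      simp [hg, Fin.append_left]
    have e2 : ∀ j, (g zw) (Fin.natAdd n j) = r⁻¹ • zw.2 j := fun j => by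
      simp [hg, Fin.append_right]
    refine ⟨?_, ?_, ?_, ?_⟩
    · have : ∑ i, Complex.normSq ((g zw) (Fin.castAdd n' i)) • A i
          = (2:ℝ)⁻¹ • ∑ i, Complex.normSq (zw.1 i) • A i := by
        rw [Finset.smul_sum]
        refine Finset.sum_congr rfl fun i _ => ?_
        rw [e1, hr, normSq_invsqrt2_smul, smul_smul]
        congr 1
        ring
      rw [this, hz1, smul_zero]
    · have : ∑ j, Complex.normSq ((g zw) (Fin.natAdd n j)) • B j
          = (2:ℝ)⁻¹ • ∑ j, Complex.normSq (zw.2 j) • B j := by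
        rw [Finset.smul_sum]
        refine Finset.sum_congr rfl fun j _ => ?_
        rw [e2, hr, normSq_invsqrt2_smul, smul_smul]
        congr 1
        ring
      rw [this, hw1, smul_zero]
    · have : ∑ i, Complex.normSq ((g zw) (Fin.castAdd n' i))
          = (∑ i, Complex.normSq (zw.1 i)) / 2 := by
        rw [Finset.sum_div]
        refine Finset.sum_congr rfl fun i _ => ?_
        rw [e1, hr, normSq_invsqrt2_smul]
      rw [this, hz2]
    · have : ∑ j, Complex.normSq ((g zw) (Fin.natAdd n j))
          = (∑ j, Complex.normSq (zw.2 j)) / 2 := by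
        rw [Finset.sum_div]
        refine Finset.sum_congr rfl fun j _ => ?_
        rw [e2, hr, normSq_invsqrt2_smul]
      rw [this, hw2]
  · -- smoothness of f
    refine ⟨Set.univ, isOpen_univ, Set.subset_univ _, (ContDiff.contDiffOn ?_)⟩
    refine ContDiff.prodMk ?_ ?_ <;> rw [contDiff_pi] <;> intro k <;>
      exact (ContDiff.const_smul r (contDiff_apply (𝕜 := ℝ) (E := ℂ) _))
  · -- smooth inverse
    refine ⟨g, Set.univ, isOpen_univ, Set.subset_univ _, (ContDiff.contDiffOn ?_), ?_⟩
    · rw [contDiff_pi]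
      intro k
      refine Fin.addCases (fun i => ?_) (fun j => ?_) k
      · simp only [hg, Fin.append_left]
        exact ContDiff.const_smul _
          ((contDiff_apply (𝕜 := ℝ) (E := ℂ) i).comp contDiff_fst)
      · simp only [hg, Fin.append_right]
        exact ContDiff.const_smul _
          ((contDiff_apply (𝕜 := ℝ) (E := ℂ) j).comp contDiff_snd)
    · intro u _
      exact hgf u

end Cfg
end Aux

/-- the product configuration is admissible and its link is diffeomorphic
to the product of the two links. -/
theorem statement4 {n n' p p' : ℕ} (A : Fin n → (Fin p → ℝ)) (B : Fin n' → (Fin p' → ℝ))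
    (hA : Admissible A) (hB : Admissible B) :
    Admissible (prodConfig A B) ∧
    ∃ f : (Fin (n + n') → ℂ) → (Fin n → ℂ) × (Fin n' → ℂ),
      IsDiffeoOn f (linkSet (prodConfig A B)) ((linkSet A) ×ˢ (linkSet B)) := by
  refine ⟨⟨siegel_prod A B hA.1 hB.1, weakHyp_prod A B hA.2 hB.2⟩, ?_⟩
  obtain ⟨f, h1, h2, h3⟩ := diffeo_part A B
  exact ⟨f, h1, h2, h3⟩
end

section
/- Let A be admissible with X_A ∩ {z_1 = 0} = ∅, and write A_i = (a_i, Ã_i) ∈ ℝ × ℝ^{p-1} with a_1 ≠ 0. Then the map z ↦ (z_1/|z_1|, z_2/√(1-|z_1|^2), ..., z_n/√(1-|z_1|^2)) is an equivariant diffeomorphism from X_A onto S^1 × X_B, where B = (Ã_2 - Ã_1 a_2/a_1, ..., Ã_n - Ã_1 a_n/a_1), and B is admissible. -/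
open Set

/-- The reduced configuration `B`, with `B_j = Ã_{j+1} - Ã_1 a_{j+1}/a_1`, where
`A_i = (a_i, Ã_i) ∈ ℝ × ℝ^{p}` (coordinates in `ℝ^{p+1}`, splitting off the first one). -/
noncomputable def reducedConfig {n p : ℕ} (A : Fin (n + 1) → (Fin (p + 1) → ℝ)) :
    Fin n → (Fin p → ℝ) :=
  fun j k => A j.succ k.succ - A 0 k.succ * (A j.succ 0 / A 0 0)


section ProofAux
open Finset

lemma weights_of_mem_convexHull {m q : ℕ} (f : Fin m → Fin q → ℝ) (J : Finset (Fin m))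
    (h : (0 : Fin q → ℝ) ∈ convexHull ℝ (f '' ↑J)) :
    ∃ ν : Fin m → ℝ, (∀ i, 0 ≤ ν i) ∧ (∀ i ∉ J, ν i = 0) ∧ ∑ i, ν i = 1 ∧
      ∑ i, ν i • f i = 0 := by
  rw [mem_convexHull_iff_exists_fintype] at h
  obtain ⟨ι, _, w, z, hw0, hw1, hz, hx⟩ := h
  choose g hgJ hgf using fun i => (hz i : z i ∈ f '' ↑J)
  refine ⟨fun i0 => ∑ i : ι, if g i = i0 then w i else 0, ?_, ?_, ?_, ?_⟩
  · intro i0; exact Finset.sum_nonneg fun i _ => by split <;> simp [hw0 i]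
  · intro i0 hi0
    refine Finset.sum_eq_zero fun i _ => ?_
    have : g i ≠ i0 := fun hgi => hi0 (hgi ▸ hgJ i)
    simp [this]
  · rw [Finset.sum_comm]
    calc ∑ i : ι, ∑ i0 : Fin m, (if g i = i0 then w i else 0)
        = ∑ i : ι, w i := by
          refine Finset.sum_congr rfl fun i _ => ?_
          simp [Finset.sum_ite_eq]
      _ = 1 := hw1
  · have : ∀ i0 : Fin m, (∑ i : ι, if g i = i0 then w i else 0) • f i0
        = ∑ i : ι, (if g i = i0 then w i • f i0 else 0) := by
      intro i0; rw [Finset.sum_smul]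
      exact Finset.sum_congr rfl fun i _ => by split <;> simp
    simp_rw [this]
    rw [Finset.sum_comm]
    calc ∑ i : ι, ∑ i0 : Fin m, (if g i = i0 then w i • f i0 else 0)
        = ∑ i : ι, w i • z i := by
          refine Finset.sum_congr rfl fun i _ => ?_
          rw [Finset.sum_ite_eq]
          simp [hgf i]
      _ = 0 := hx

section aux
variable {n p : ℕ} {A : Fin (n + 1) → (Fin (p + 1) → ℝ)}

lemma A0_ne (hW : WeakHyp A) : A 0 ≠ 0 := by
  intro h0
  have : (0 : Fin (p+1) → ℝ) ∈ convexHull ℝ (A '' ↑({0} : Finset (Fin (n+1)))) := by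
    apply subset_convexHull
    exact ⟨0, by simp, h0⟩
  have := hW {0} this
  simp at this

/-- If there is a convex combination of the `A j.succ` equal to zero, we get a point of the
link with vanishing first coordinate. -/
lemma no_zero_first (hdisj : ∀ z ∈ linkSet A, z 0 ≠ 0)
    (ν : Fin n → ℝ) (hν0 : ∀ j, 0 ≤ ν j) (hν1 : ∑ j, ν j = 1)
    (hνA : ∑ j, ν j • A j.succ = 0) : False := by
  set z : Fin (n+1) → ℂ := Fin.cases 0 (fun j => ((Real.sqrt (ν j) : ℝ) : ℂ)) with hz
  have hns : ∀ i : Fin (n+1), Complex.normSq (z i) = (Fin.cases 0 ν : Fin (n+1) → ℝ) i := by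
    intro i
    induction i using Fin.cases with
    | zero => simp [hz]
    | succ j =>
      simp [hz, Complex.normSq_ofReal, Real.mul_self_sqrt (hν0 j)]
  have hmem : z ∈ linkSet A := by
    constructor
    · simp only [hns]
      rw [Fin.sum_univ_succ]
      simpa using hνA
    · simp only [hns]
      rw [Fin.sum_univ_succ]
      simpa using hν1
  exact hdisj z hmem (by simp [hz])

lemma t0_lt_one (hW : WeakHyp A) {z : Fin (n+1) → ℂ} (hz : z ∈ linkSet A) :
    Complex.normSq (z 0) < 1 := by
  obtain ⟨h1, h2⟩ := hz
  rw [Fin.sum_univ_succ] at h2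
  have hle : Complex.normSq (z 0) ≤ 1 := by
    nlinarith [Finset.sum_nonneg (fun (j : Fin n) (_ : j ∈ Finset.univ) => Complex.normSq_nonneg (z j.succ))]
  rcases lt_or_eq_of_le hle with h | h
  · exact h
  · exfalso
    have hsum0 : ∑ j : Fin n, Complex.normSq (z j.succ) = 0 := by linarith
    have hz0 : ∀ j : Fin n, Complex.normSq (z j.succ) = 0 := by
      intro j
      have := Finset.sum_eq_zero_iff_of_nonneg
        (fun j (_ : j ∈ Finset.univ) => Complex.normSq_nonneg (z j.succ)) |>.mp hsum0
      exact this j (Finset.mem_univ j)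
    rw [Fin.sum_univ_succ] at h1
    have : A 0 = 0 := by
      have h1' : Complex.normSq (z 0) • A 0 = 0 := by
        rw [← h1]; simp [hz0]
      rw [h] at h1'; simpa using h1'
    exact A0_ne hW this

/-- Key identity: if `∑ s_j • B_j = 0` then `∑ s_j • A_{j+1} = r • A_0`. -/
lemma sum_smul_eq (ha : A 0 0 ≠ 0) (s : Fin n → ℝ)
    (hB : ∑ j, s j • reducedConfig A j = 0) :
    ∑ j, s j • A j.succ = ((∑ j, s j * A j.succ 0) / A 0 0) • A 0 := by
  funext k
  induction k using Fin.cases with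
  | zero =>
    simp only [Finset.sum_apply, Pi.smul_apply, smul_eq_mul]
    field_simp
  | succ k =>
    have := congrFun hB k
    simp only [Finset.sum_apply, Pi.smul_apply, smul_eq_mul, Pi.zero_apply,
      reducedConfig] at this ⊢
    have lhs : ∑ j, s j * (A j.succ k.succ - A 0 k.succ * (A j.succ 0 / A 0 0)) =
        ∑ j, s j * A j.succ k.succ - (∑ j, s j * A j.succ 0) * (A 0 k.succ / A 0 0) := by
      rw [Finset.sum_mul, ← Finset.sum_sub_distrib]
      exact Finset.sum_congr rfl fun j _ => by ring
    rw [lhs] at this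
    have : ∑ j, s j * A j.succ k.succ = (∑ j, s j * A j.succ 0) * (A 0 k.succ / A 0 0) := by
      linarith
    rw [this]; ring

end aux

section aux2
variable {n p : ℕ} {A : Fin (n + 1) → (Fin (p + 1) → ℝ)}

lemma siegel_weights (hS : Siegel A) :
    ∃ μ : Fin (n+1) → ℝ, (∀ i, 0 ≤ μ i) ∧ ∑ i, μ i = 1 ∧ ∑ i, μ i • A i = 0 := by
  have : (0 : Fin (p+1) → ℝ) ∈ convexHull ℝ (A '' ↑(Finset.univ : Finset (Fin (n+1)))) := by
    simpa [Set.image_univ, Siegel] using hS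
  obtain ⟨μ, h0, _, h1, h2⟩ := weights_of_mem_convexHull A Finset.univ this
  exact ⟨μ, h0, h1, h2⟩

/-- The key sign lemma: a convex combination witnessing `0` for `B` has
`∑ s_j a_{j+1}` of sign opposite to `a_0`. -/
lemma key_neg (hA : Admissible A) (hdisj : ∀ z ∈ linkSet A, z 0 ≠ 0) (ha : A 0 0 ≠ 0)
    (s : Fin n → ℝ) (hs0 : ∀ j, 0 ≤ s j) (hs1 : ∑ j, s j = 1)
    (hsB : ∑ j, s j • reducedConfig A j = 0) :
    (∑ j, s j * A j.succ 0) / A 0 0 < 0 := by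
  set r := (∑ j, s j * A j.succ 0) / A 0 0 with hr
  have hid : ∑ j, s j • A j.succ = r • A 0 := sum_smul_eq ha s hsB
  rcases lt_trichotomy r 0 with h | h | h
  · exact h
  · exfalso
    apply no_zero_first hdisj s hs0 hs1
    rw [hid, h, zero_smul]
  · exfalso
    obtain ⟨μ, hμ0, hμ1, hμA⟩ := siegel_weights hA.1
    set ν : Fin n → ℝ := fun j => μ j.succ + (μ 0 / r) * s j with hν
    have hν0 : ∀ j, 0 ≤ ν j := fun j => by
      have := hμ0 j.succ
      have := hμ0 0
      have := hs0 j
      positivity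
    have hνA : ∑ j, ν j • A j.succ = 0 := by
      have : ∑ j, ν j • A j.succ
          = ∑ j : Fin n, μ j.succ • A j.succ + (μ 0 / r) • (∑ j, s j • A j.succ) := by
        rw [Finset.smul_sum, ← Finset.sum_add_distrib]
        exact Finset.sum_congr rfl fun (j : Fin n) _ => by
          simp only [hν, add_smul, smul_smul]
      rw [this, hid, smul_smul, div_mul_cancel₀ _ (ne_of_gt h)]
      rw [Fin.sum_univ_succ] at hμA
      linear_combination (norm := module) hμA
    have hT : 0 < ∑ j, ν j := by
      have hsν : ∑ j, ν j = (1 - μ 0) + μ 0 / r := by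
        rw [Fin.sum_univ_succ] at hμ1
        simp only [hν]
        rw [Finset.sum_add_distrib, ← Finset.mul_sum, hs1]
        linarith
      have hμ0le : μ 0 ≤ 1 := by
        rw [Fin.sum_univ_succ] at hμ1
        have : 0 ≤ ∑ j : Fin n, μ j.succ := Finset.sum_nonneg fun j _ => hμ0 j.succ
        linarith
      rcases eq_or_lt_of_le (hμ0 0) with h0 | h0
      · rw [hsν, ← h0]; norm_num
      · rw [hsν]
        have : 0 < μ 0 / r := div_pos h0 h
        have : 0 ≤ 1 - μ 0 := by linarith
        linarith
    set T := ∑ j, ν j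
    apply no_zero_first hdisj (fun j => ν j / T) (fun j => div_nonneg (hν0 j) hT.le)
    · rw [← Finset.sum_div, div_self hT.ne']
    · have : ∑ j, (ν j / T) • A j.succ = (T⁻¹ : ℝ) • ∑ j, ν j • A j.succ := by
        rw [Finset.smul_sum]
        exact Finset.sum_congr rfl fun j _ => by
          rw [smul_smul]; congr 1; field_simp
      rw [this, hνA, smul_zero]

end aux2

section aux3
variable {n p : ℕ} {A : Fin (n + 1) → (Fin (p + 1) → ℝ)}

lemma reduced_sum_zero (ha : A 0 0 ≠ 0) (μ : Fin (n+1) → ℝ)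
    (hμA : ∑ i, μ i • A i = 0) :
    ∑ j : Fin n, μ j.succ • reducedConfig A j = 0 := by
  rw [Fin.sum_univ_succ] at hμA
  have hsucc : ∑ j : Fin n, μ j.succ • A j.succ = -(μ 0 • A 0) := by
    linear_combination (norm := module) hμA
  funext k
  have h1 := congrFun hsucc k.succ
  have h0 := congrFun hsucc 0
  simp only [Finset.sum_apply, Pi.smul_apply, smul_eq_mul, Pi.neg_apply] at h1 h0 ⊢
  simp only [reducedConfig, Pi.zero_apply]
  have : ∑ j : Fin n, μ j.succ * (A j.succ k.succ - A 0 k.succ * (A j.succ 0 / A 0 0))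
      = ∑ j : Fin n, μ j.succ * A j.succ k.succ
        - (∑ j : Fin n, μ j.succ * A j.succ 0) * (A 0 k.succ / A 0 0) := by
    rw [Finset.sum_mul, ← Finset.sum_sub_distrib]
    exact Finset.sum_congr rfl fun j _ => by ring
  rw [this, h1, h0]
  field_simp
  ring

lemma admissible_reduced (hA : Admissible A) (hdisj : ∀ z ∈ linkSet A, z 0 ≠ 0)
    (ha : A 0 0 ≠ 0) : Admissible (reducedConfig A) := by
  constructor
  · -- Siegel
    obtain ⟨μ, hμ0, hμ1, hμA⟩ := siegel_weights hA.1
    have hRB : ∑ j : Fin n, μ j.succ • reducedConfig A j = 0 := reduced_sum_zero ha μ hμA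
    set M := ∑ j : Fin n, μ j.succ with hM
    have hMnn : 0 ≤ M := Finset.sum_nonneg fun j _ => hμ0 j.succ
    rcases eq_or_lt_of_le hMnn with hM0 | hMpos
    · exfalso
      have hz : ∀ j : Fin n, μ j.succ = 0 := by
        intro j
        exact (Finset.sum_eq_zero_iff_of_nonneg fun j _ => hμ0 j.succ).mp hM0.symm j
          (Finset.mem_univ j)
      rw [Fin.sum_univ_succ] at hμ1 hμA
      simp only [hz, zero_smul, Finset.sum_const_zero, add_zero] at hμ1 hμA
      apply A0_ne hA.2
      rw [hμ1] at hμA; simpa using hμA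
    · apply mem_convexHull_of_exists_fintype (fun j : Fin n => μ j.succ / M)
        (reducedConfig A)
      · intro j; exact div_nonneg (hμ0 j.succ) hMnn
      · rw [← Finset.sum_div, ← hM, div_self hMpos.ne']
      · intro j; exact Set.mem_range_self j
      · rw [show (0 : Fin p → ℝ) = (M⁻¹ : ℝ) • (0 : Fin p → ℝ) by simp, ← hRB,
          Finset.smul_sum]
        exact Finset.sum_congr rfl fun j _ => by rw [smul_smul, div_eq_inv_mul]
  · -- WeakHyp
    intro J hJ
    obtain ⟨ν, hν0, hνsupp, hν1, hνB⟩ := weights_of_mem_convexHull (reducedConfig A) J hJ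
    have hr : (∑ j, ν j * A j.succ 0) / A 0 0 < 0 := key_neg hA hdisj ha ν hν0 hν1 hνB
    set r := (∑ j, ν j * A j.succ 0) / A 0 0 with hrdef
    have hid : ∑ j, ν j • A j.succ = r • A 0 := sum_smul_eq ha ν hνB
    set w : Fin (n+1) → ℝ := Fin.cases (-r) ν with hw
    set I : Finset (Fin (n+1)) := insert 0 (J.map (Fin.succEmb n)) with hI
    have h0notin : (0 : Fin (n+1)) ∉ J.map (Fin.succEmb n) := by
      simp only [Finset.mem_map]
      rintro ⟨j, _, hj⟩
      exact Fin.succ_ne_zero j hj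
    have hmem : (0 : Fin (p+1) → ℝ) ∈ convexHull ℝ (A '' ↑I) := by
      have hsum : ∑ i ∈ I, w i • A i = 0 := by
        rw [hI, Finset.sum_insert h0notin, Finset.sum_map]
        have : ∑ j ∈ J, w ((Fin.succEmb n) j) • A ((Fin.succEmb n) j)
            = ∑ j ∈ J, ν j • A j.succ := by
          exact Finset.sum_congr rfl fun j _ => by simp [hw, Fin.succEmb]
        rw [this]
        have : ∑ j ∈ J, ν j • A j.succ = ∑ j, ν j • A j.succ := by
          apply Finset.sum_subset (Finset.subset_univ J)
          intro j _ hj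
          rw [hνsupp j hj, zero_smul]
        rw [this, hid]
        simp [hw]
      have hwsum : 0 < ∑ i ∈ I, w i := by
        rw [hI, Finset.sum_insert h0notin, Finset.sum_map]
        have : ∑ j ∈ J, w ((Fin.succEmb n) j) = ∑ j ∈ J, ν j :=
          Finset.sum_congr rfl fun j _ => by simp [hw, Fin.succEmb]
        rw [this]
        have : ∑ j ∈ J, ν j = 1 := by
          rw [← hν1]
          apply Finset.sum_subset (Finset.subset_univ J)
          intro j _ hj; exact hνsupp j hj
        rw [this]
        simp [hw]
        linarith
      have := Finset.centerMass_mem_convexHull (s := A '' ↑I) I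
        (w := w) (z := A) ?_ hwsum ?_
      · rwa [Finset.centerMass, hsum, smul_zero] at this
      · intro i hi
        rw [hI] at hi
        rcases Finset.mem_insert.mp hi with h | h
        · rw [h]; simp [hw]; linarith
        · obtain ⟨j, _, hj⟩ := Finset.mem_map.mp h
          rw [← hj]
          simpa [hw, Fin.succEmb] using hν0 j
      · intro i hi
        exact Set.mem_image_of_mem A hi
    have hcard := hA.2 I hmem
    rw [hI, Finset.card_insert_of_notMem h0notin, Finset.card_map] at hcard
    omega

end aux3

noncomputable section S5maps
variable {n p : ℕ}

def fwd (z : Fin (n+1) → ℂ) : ℂ × (Fin n → ℂ) :=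
  (z 0 / (‖z 0‖ : ℂ), fun j : Fin n =>
    z j.succ / ((Real.sqrt (1 - Complex.normSq (z 0)) : ℝ) : ℂ))

def rOf (A : Fin (n+1) → Fin (p+1) → ℝ) (w : ℂ × (Fin n → ℂ)) : ℝ :=
  (∑ j, Complex.normSq (w.2 j) * A j.succ 0) / A 0 0

def tOf (A : Fin (n+1) → Fin (p+1) → ℝ) (w : ℂ × (Fin n → ℂ)) : ℝ :=
  rOf A w / (rOf A w - 1)

def bwd (A : Fin (n+1) → Fin (p+1) → ℝ) (w : ℂ × (Fin n → ℂ)) : Fin (n+1) → ℂ :=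
  Fin.cases (w.1 * ((Real.sqrt (tOf A w) : ℝ) : ℂ))
    (fun j : Fin n => w.2 j * ((Real.sqrt (1 - tOf A w) : ℝ) : ℂ))

variable {A : Fin (n + 1) → (Fin (p + 1) → ℝ)}

lemma link_coord0 {z : Fin (n+1) → ℂ} (hz : z ∈ linkSet A) :
    ∑ i, Complex.normSq (z i) * A i 0 = 0 := by
  have := congrFun hz.1 0
  simpa using this

lemma normSq_fwd_snd {z : Fin (n+1) → ℂ} (hlt : Complex.normSq (z 0) < 1) (j : Fin n) :
    Complex.normSq ((fwd z).2 j) = Complex.normSq (z j.succ) / (1 - Complex.normSq (z 0)) := by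
  have hd : (0:ℝ) ≤ 1 - Complex.normSq (z 0) := by linarith
  simp only [fwd, map_div₀, Complex.normSq_ofReal]
  rw [Real.mul_self_sqrt hd]

lemma tOf_fwd (hW : WeakHyp A) (ha : A 0 0 ≠ 0) {z : Fin (n+1) → ℂ} (hz : z ∈ linkSet A) :
    tOf A (fwd z) = Complex.normSq (z 0) := by
  set t0 := Complex.normSq (z 0) with ht0
  have hlt : t0 < 1 := t0_lt_one hW hz
  have hd : (0:ℝ) < 1 - t0 := by linarith
  have hc0 := link_coord0 hz
  rw [Fin.sum_univ_succ] at hc0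
  have hr : rOf A (fwd z) = -t0 / (1 - t0) := by
    rw [rOf]
    have : ∑ j : Fin n, Complex.normSq ((fwd z).2 j) * A j.succ 0
        = (∑ j : Fin n, Complex.normSq (z j.succ) * A j.succ 0) / (1 - t0) := by
      rw [Finset.sum_div]
      exact Finset.sum_congr rfl fun j _ => by
        rw [normSq_fwd_snd hlt j]; ring
    rw [this]
    have hs : ∑ j : Fin n, Complex.normSq (z j.succ) * A j.succ 0 = -(t0 * A 0 0) := by
      linarith
    rw [hs]
    field_simp
  rw [tOf, hr]
  have h1 : -t0 / (1 - t0) - 1 = -1 / (1 - t0) := by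
    field_simp
    ring
  rw [h1, div_div_div_eq]
  rw [div_eq_iff (by nlinarith : (1 - t0) * (-1 : ℝ) ≠ 0)]
  ring

lemma mapsTo_fwd (hA : Admissible A) (hdisj : ∀ z ∈ linkSet A, z 0 ≠ 0) (ha : A 0 0 ≠ 0) :
    Set.MapsTo fwd (linkSet A)
      {w : ℂ × (Fin n → ℂ) | ‖w.1‖ = 1 ∧ w.2 ∈ linkSet (reducedConfig A)} := by
  intro z hz
  have hz0 : z 0 ≠ 0 := hdisj z hz
  have hlt : Complex.normSq (z 0) < 1 := t0_lt_one hA.2 hz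
  have hd : (0:ℝ) < 1 - Complex.normSq (z 0) := by linarith
  constructor
  · show ‖z 0 / (‖z 0‖ : ℂ)‖ = 1
    rw [norm_div]
    simp only [Complex.norm_real, norm_norm]
    rw [div_self (norm_ne_zero_iff.mpr hz0)]
  · constructor
    · -- vector equation
      have hRB : ∑ j : Fin n, Complex.normSq (z j.succ) • reducedConfig A j = 0 :=
        reduced_sum_zero ha _ hz.1
      have : ∑ j : Fin n, Complex.normSq ((fwd z).2 j) • reducedConfig A j
          = ((1 - Complex.normSq (z 0))⁻¹ : ℝ) •
            ∑ j : Fin n, Complex.normSq (z j.succ) • reducedConfig A j := by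
        rw [Finset.smul_sum]
        exact Finset.sum_congr rfl fun j _ => by
          rw [normSq_fwd_snd hlt j, smul_smul, div_eq_inv_mul]
      rw [this, hRB, smul_zero]
    · -- sum of squares
      have h2 := hz.2
      rw [Fin.sum_univ_succ] at h2
      have : ∑ j : Fin n, Complex.normSq ((fwd z).2 j)
          = (∑ j : Fin n, Complex.normSq (z j.succ)) / (1 - Complex.normSq (z 0)) := by
        rw [Finset.sum_div]
        exact Finset.sum_congr rfl fun j _ => normSq_fwd_snd hlt j
      rw [this]
      rw [show ∑ j : Fin n, Complex.normSq (z j.succ) = 1 - Complex.normSq (z 0) by linarith]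
      field_simp

lemma rOf_neg (hA : Admissible A) (hdisj : ∀ z ∈ linkSet A, z 0 ≠ 0) (ha : A 0 0 ≠ 0)
    {w : ℂ × (Fin n → ℂ)} (hw : w.2 ∈ linkSet (reducedConfig A)) : rOf A w < 0 :=
  key_neg hA hdisj ha _ (fun j => Complex.normSq_nonneg _) hw.2 hw.1

lemma tOf_mem {w : ℂ × (Fin n → ℂ)} (hr : rOf A w < 0) : 0 < tOf A w ∧ tOf A w < 1 := by
  rw [tOf]
  constructor
  · exact div_pos_of_neg_of_neg hr (by linarith)
  · rw [div_lt_one_iff]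
    right; right
    constructor <;> linarith

end S5maps

section S5inv
variable {n p : ℕ} {A : Fin (n + 1) → (Fin (p + 1) → ℝ)}

lemma normSq_bwd_zero {w : ℂ × (Fin n → ℂ)} (hw1 : ‖w.1‖ = 1) (ht : 0 ≤ tOf A w) :
    Complex.normSq (bwd A w 0) = tOf A w := by
  have : Complex.normSq w.1 = 1 := by
    rw [Complex.normSq_eq_norm_sq, hw1, one_pow]
  simp only [bwd, Fin.cases_zero, map_mul, Complex.normSq_ofReal, this, one_mul]
  rw [Real.mul_self_sqrt ht]

lemma normSq_bwd_succ {w : ℂ × (Fin n → ℂ)} (ht : tOf A w ≤ 1) (j : Fin n) :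
    Complex.normSq (bwd A w j.succ) = Complex.normSq (w.2 j) * (1 - tOf A w) := by
  simp only [bwd, Fin.cases_succ, map_mul, Complex.normSq_ofReal]
  rw [Real.mul_self_sqrt (by linarith)]

lemma mapsTo_bwd (hA : Admissible A) (hdisj : ∀ z ∈ linkSet A, z 0 ≠ 0) (ha : A 0 0 ≠ 0) :
    Set.MapsTo (bwd A)
      {w : ℂ × (Fin n → ℂ) | ‖w.1‖ = 1 ∧ w.2 ∈ linkSet (reducedConfig A)}
      (linkSet A) := by
  rintro w ⟨hw1, hw2⟩
  have hr : rOf A w < 0 := rOf_neg hA hdisj ha hw2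
  obtain ⟨ht0, ht1⟩ := tOf_mem (A := A) hr
  set t := tOf A w with htdef
  set s : Fin n → ℝ := fun j => Complex.normSq (w.2 j) with hs
  have hid : ∑ j, s j • A j.succ = rOf A w • A 0 := sum_smul_eq ha s hw2.1
  constructor
  · rw [Fin.sum_univ_succ, normSq_bwd_zero hw1 ht0.le]
    have : ∑ j : Fin n, Complex.normSq (bwd A w j.succ) • A j.succ
        = (1 - t) • ∑ j : Fin n, s j • A j.succ := by
      rw [Finset.smul_sum]
      exact Finset.sum_congr rfl fun j _ => by
        rw [normSq_bwd_succ ht1.le j, smul_smul, mul_comm]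
    rw [this, hid, smul_smul]
    have hcoef : t + (1 - t) * rOf A w = 0 := by
      have hne : rOf A w - 1 ≠ 0 := by linarith
      rw [htdef, tOf]
      field_simp
      ring
    linear_combination (norm := module) hcoef • (A 0)
  · rw [Fin.sum_univ_succ, normSq_bwd_zero hw1 ht0.le]
    have : ∑ j : Fin n, Complex.normSq (bwd A w j.succ) = (1 - t) * ∑ j : Fin n, s j := by
      rw [Finset.mul_sum]
      exact Finset.sum_congr rfl fun j _ => by rw [normSq_bwd_succ ht1.le j]; ring
    rw [this, hw2.2]
    ring

lemma bwd_fwd (hA : Admissible A) (hdisj : ∀ z ∈ linkSet A, z 0 ≠ 0) (ha : A 0 0 ≠ 0)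
    {z : Fin (n+1) → ℂ} (hz : z ∈ linkSet A) : bwd A (fwd z) = z := by
  have hz0 : z 0 ≠ 0 := hdisj z hz
  have hlt : Complex.normSq (z 0) < 1 := t0_lt_one hA.2 hz
  have ht : tOf A (fwd z) = Complex.normSq (z 0) := tOf_fwd hA.2 ha hz
  funext i
  induction i using Fin.cases with
  | zero =>
    have hb : bwd A (fwd z) 0 = (fwd z).1 * ((Real.sqrt (tOf A (fwd z)) : ℝ) : ℂ) := rfl
    rw [hb, ht]
    show z 0 / (‖z 0‖ : ℂ) * _ = z 0
    rw [show Real.sqrt (Complex.normSq (z 0)) = ‖z 0‖ by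
      rw [Complex.norm_def]]
    rw [div_mul_cancel₀]
    simpa using norm_ne_zero_iff.mpr hz0
  | succ j =>
    have hb : bwd A (fwd z) j.succ
        = (fwd z).2 j * ((Real.sqrt (1 - tOf A (fwd z)) : ℝ) : ℂ) := rfl
    rw [hb, ht]
    show z j.succ / ((Real.sqrt (1 - Complex.normSq (z 0)) : ℝ) : ℂ) * _ = z j.succ
    rw [div_mul_cancel₀]
    have : (0:ℝ) < Real.sqrt (1 - Complex.normSq (z 0)) := Real.sqrt_pos.mpr (by linarith)
    simpa using this.ne'

lemma fwd_bwd (hA : Admissible A) (hdisj : ∀ z ∈ linkSet A, z 0 ≠ 0) (ha : A 0 0 ≠ 0)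
    {w : ℂ × (Fin n → ℂ)} (hw : ‖w.1‖ = 1 ∧ w.2 ∈ linkSet (reducedConfig A)) :
    fwd (bwd A w) = w := by
  obtain ⟨hw1, hw2⟩ := hw
  have hr : rOf A w < 0 := rOf_neg hA hdisj ha hw2
  obtain ⟨ht0, ht1⟩ := tOf_mem (A := A) hr
  have hnz : Complex.normSq (bwd A w 0) = tOf A w := normSq_bwd_zero hw1 ht0.le
  have hsq : (0:ℝ) < Real.sqrt (tOf A w) := Real.sqrt_pos.mpr ht0
  have hsq1 : (0:ℝ) < Real.sqrt (1 - tOf A w) := Real.sqrt_pos.mpr (by linarith)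
  have hnrm : ‖bwd A w 0‖ = Real.sqrt (tOf A w) := by
    show ‖w.1 * _‖ = _
    rw [norm_mul, hw1, one_mul, Complex.norm_real, Real.norm_eq_abs,
      abs_of_pos hsq]
  refine Prod.ext ?_ (funext fun j => ?_)
  · show bwd A w 0 / (‖bwd A w 0‖ : ℂ) = w.1
    rw [hnrm]
    show w.1 * ((Real.sqrt (tOf A w) : ℝ) : ℂ) / _ = w.1
    rw [mul_div_assoc, div_self (by exact_mod_cast hsq.ne'), mul_one]
  · show bwd A w j.succ / ((Real.sqrt (1 - Complex.normSq (bwd A w 0)) : ℝ) : ℂ) = w.2 j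
    rw [hnz]
    show w.2 j * ((Real.sqrt (1 - tOf A w) : ℝ) : ℂ) / _ = w.2 j
    rw [mul_div_assoc, div_self (by exact_mod_cast hsq1.ne'), mul_one]

end S5inv

section S5smooth
variable {n p : ℕ} {A : Fin (n + 1) → (Fin (p + 1) → ℝ)}

lemma cdivAt {E : Type*} [NormedAddCommGroup E] [NormedSpace ℝ E] {f g : E → ℂ} {x : E}
    (hf : ContDiffAt ℝ (⊤ : ℕ∞) f x) (hg : ContDiffAt ℝ (⊤ : ℕ∞) g x) (hx : g x ≠ 0) :
    ContDiffAt ℝ (⊤ : ℕ∞) (fun x => f x / g x) x := by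
  simp only [div_eq_mul_inv]
  exact hf.mul (hg.inv hx)

lemma contDiff_normSqC : ContDiff ℝ (⊤ : ℕ∞) (Complex.normSq : ℂ → ℝ) := by
  have h : ContDiff ℝ (⊤ : ℕ∞) (fun z : ℂ => ‖z‖^2) := ContDiff.norm_sq ℝ contDiff_id
  have he : (Complex.normSq : ℂ → ℝ) = fun z : ℂ => ‖z‖^2 := by
    funext z; rw [Complex.normSq_eq_norm_sq]
  rw [he]; exact h

lemma isOpen_U : IsOpen {z : Fin (n+1) → ℂ | z 0 ≠ 0 ∧ Complex.normSq (z 0) < 1} := by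
  apply IsOpen.inter
  · exact isOpen_compl_singleton.preimage (continuous_apply 0)
  · exact (isOpen_Iio (a := (1:ℝ))).preimage
      (Complex.continuous_normSq.comp (continuous_apply 0))

lemma contDiffOn_fwd :
    ContDiffOn ℝ (⊤ : ℕ∞) (fwd : (Fin (n+1) → ℂ) → ℂ × (Fin n → ℂ))
      {z : Fin (n+1) → ℂ | z 0 ≠ 0 ∧ Complex.normSq (z 0) < 1} := by
  intro z hz
  apply ContDiffAt.contDiffWithinAt
  have e0 : ContDiffAt ℝ (⊤ : ℕ∞) (fun z : Fin (n+1) → ℂ => z 0) z :=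
    (ContinuousLinearMap.proj 0 : (Fin (n+1) → ℂ) →L[ℝ] ℂ).contDiff.contDiffAt
  have hnorm : ContDiffAt ℝ (⊤ : ℕ∞) (fun z : Fin (n+1) → ℂ => ((‖z 0‖ : ℝ) : ℂ)) z :=
    Complex.ofRealCLM.contDiff.contDiffAt.comp z
      (ContDiffAt.comp (g := fun w : ℂ => ‖w‖) (f := fun z : Fin (n+1) → ℂ => z 0) z (contDiffAt_norm ℝ hz.1) e0)
  have hden : ContDiffAt ℝ (⊤ : ℕ∞)
      (fun z : Fin (n+1) → ℂ => ((Real.sqrt (1 - Complex.normSq (z 0)) : ℝ) : ℂ)) z := by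
    have h1 : ContDiffAt ℝ (⊤ : ℕ∞) (fun z : Fin (n+1) → ℂ => 1 - Complex.normSq (z 0)) z :=
      contDiffAt_const.sub (contDiff_normSqC.contDiffAt.comp z e0)
    have h2 : ContDiffAt ℝ (⊤ : ℕ∞) Real.sqrt (1 - Complex.normSq (z 0)) :=
      Real.contDiffAt_sqrt (by have := hz.2; intro h; simp only [Set.mem_setOf_eq] at hz; nlinarith)
    exact Complex.ofRealCLM.contDiff.contDiffAt.comp z (h2.comp z h1)
  apply ContDiffAt.prodMk
  · exact cdivAt e0 hnorm (by simpa using norm_ne_zero_iff.mpr hz.1)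
  · rw [contDiffAt_pi]
    intro j
    refine cdivAt
      ((ContinuousLinearMap.proj j.succ : (Fin (n+1) → ℂ) →L[ℝ] ℂ).contDiff.contDiffAt)
      hden ?_
    have : (0:ℝ) < Real.sqrt (1 - Complex.normSq (z 0)) :=
      Real.sqrt_pos.mpr (by have := hz.2; simp only [Set.mem_setOf_eq] at hz; linarith)
    simpa using this.ne'

lemma contDiff_rOf : ContDiff ℝ (⊤ : ℕ∞) (rOf A) := by
  apply ContDiff.div_const
  apply ContDiff.sum
  intro j _
  apply ContDiff.mul _ contDiff_const
  exact contDiff_normSqC.comp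
    ((ContinuousLinearMap.proj j : (Fin n → ℂ) →L[ℝ] ℂ).contDiff.comp
      (ContinuousLinearMap.snd ℝ ℂ (Fin n → ℂ)).contDiff)

lemma isOpen_V : IsOpen {w : ℂ × (Fin n → ℂ) | rOf A w < 0} :=
  (isOpen_Iio (a := (0:ℝ))).preimage contDiff_rOf.continuous

lemma contDiffOn_bwd :
    ContDiffOn ℝ (⊤ : ℕ∞) (bwd A) {w : ℂ × (Fin n → ℂ) | rOf A w < 0} := by
  intro w hw
  apply ContDiffAt.contDiffWithinAt
  have hrw : rOf A w < 0 := hw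
  obtain ⟨ht0, ht1⟩ := tOf_mem (A := A) hrw
  have htc : ContDiffAt ℝ (⊤ : ℕ∞) (tOf A) w := by
    apply ContDiffAt.div contDiff_rOf.contDiffAt
      (contDiff_rOf.contDiffAt.sub contDiffAt_const)
    linarith
  have hs1 : ContDiffAt ℝ (⊤ : ℕ∞) (fun w => ((Real.sqrt (tOf A w) : ℝ) : ℂ)) w :=
    Complex.ofRealCLM.contDiff.contDiffAt.comp w
      ((Real.contDiffAt_sqrt ht0.ne').comp w htc)
  have hs2 : ContDiffAt ℝ (⊤ : ℕ∞) (fun w => ((Real.sqrt (1 - tOf A w) : ℝ) : ℂ)) w :=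
    Complex.ofRealCLM.contDiff.contDiffAt.comp w
      ((Real.contDiffAt_sqrt (by linarith : 1 - tOf A w ≠ 0)).comp w
        (contDiffAt_const.sub htc))
  rw [contDiffAt_pi]
  intro i
  induction i using Fin.cases with
  | zero =>
    simp only [bwd, Fin.cases_zero]
    exact ((ContinuousLinearMap.fst ℝ ℂ (Fin n → ℂ)).contDiff.contDiffAt).mul hs1
  | succ j =>
    simp only [bwd, Fin.cases_succ]
    refine ContDiffAt.mul ?_ hs2
    exact ((ContinuousLinearMap.proj j : (Fin n → ℂ) →L[ℝ] ℂ).contDiff.comp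
      (ContinuousLinearMap.snd ℝ ℂ (Fin n → ℂ)).contDiff).contDiffAt

end S5smooth

section S5final
variable {n p : ℕ} {A : Fin (n + 1) → (Fin (p + 1) → ℝ)}

lemma normSq_unit_mul {u z : ℂ} (hu : ‖u‖ = 1) :
    Complex.normSq (u * z) = Complex.normSq z := by
  rw [map_mul]
  have : Complex.normSq u = 1 := by
    rw [Complex.normSq_eq_norm_sq, hu, one_pow]
  rw [this, one_mul]

theorem statement5' (hA : Admissible A)
    (hdisj : ∀ z ∈ linkSet A, z 0 ≠ 0)
    (ha : A 0 0 ≠ 0) :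
    Admissible (reducedConfig A) ∧
    IsDiffeoOn
      (fun z : Fin (n + 1) → ℂ =>
        ((z 0 / (‖z 0‖ : ℂ), fun j : Fin n =>
          z j.succ / ((Real.sqrt (1 - Complex.normSq (z 0)) : ℝ) : ℂ)) : ℂ × (Fin n → ℂ)))
      (linkSet A)
      {w : ℂ × (Fin n → ℂ) | ‖w.1‖ = 1 ∧ w.2 ∈ linkSet (reducedConfig A)} ∧
    (∀ u : Fin (n + 1) → ℂ, (∀ i, ‖u i‖ = 1) → ∀ z ∈ linkSet A,
      (fun i => u i * z i) ∈ linkSet A ∧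
      ((u 0 * z 0) / (‖u 0 * z 0‖ : ℂ),
        (fun j : Fin n => (u j.succ * z j.succ) /
          ((Real.sqrt (1 - Complex.normSq (u 0 * z 0)) : ℝ) : ℂ))) =
      ((u 0 * (z 0 / (‖z 0‖ : ℂ)),
        fun j : Fin n => u j.succ *
          (z j.succ / ((Real.sqrt (1 - Complex.normSq (z 0)) : ℝ) : ℂ))) : ℂ × (Fin n → ℂ))) := by
  have hfwd : (fun z : Fin (n + 1) → ℂ =>
      ((z 0 / (‖z 0‖ : ℂ), fun j : Fin n =>
        z j.succ / ((Real.sqrt (1 - Complex.normSq (z 0)) : ℝ) : ℂ)) : ℂ × (Fin n → ℂ)))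
      = (fwd : (Fin (n+1) → ℂ) → ℂ × (Fin n → ℂ)) := rfl
  refine ⟨admissible_reduced hA hdisj ha, ?_, ?_⟩
  · rw [hfwd]
    refine ⟨?_, ?_, ?_⟩
    · exact Set.InvOn.bijOn ⟨fun z hz => bwd_fwd hA hdisj ha hz,
        fun w hw => fwd_bwd hA hdisj ha hw⟩ (mapsTo_fwd hA hdisj ha) (mapsTo_bwd hA hdisj ha)
    · refine ⟨{z : Fin (n+1) → ℂ | z 0 ≠ 0 ∧ Complex.normSq (z 0) < 1}, isOpen_U, ?_,
        contDiffOn_fwd⟩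
      intro z hz
      exact ⟨hdisj z hz, t0_lt_one hA.2 hz⟩
    · refine ⟨bwd A, {w : ℂ × (Fin n → ℂ) | rOf A w < 0}, isOpen_V, ?_, contDiffOn_bwd, ?_⟩
      · intro w hw
        exact rOf_neg hA hdisj ha hw.2
      · intro z hz
        exact bwd_fwd hA hdisj ha hz
  · intro u hu z hz
    constructor
    · constructor
      · have : ∀ i, Complex.normSq (u i * z i) = Complex.normSq (z i) :=
          fun i => normSq_unit_mul (hu i)
        simp only [this]
        exact hz.1
      · have : ∀ i, Complex.normSq (u i * z i) = Complex.normSq (z i) :=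
          fun i => normSq_unit_mul (hu i)
        simp only [this]
        exact hz.2
    · have hn0 : ‖u 0 * z 0‖ = ‖z 0‖ := by rw [norm_mul, hu 0, one_mul]
      have hns0 : Complex.normSq (u 0 * z 0) = Complex.normSq (z 0) :=
        normSq_unit_mul (hu 0)
      refine Prod.ext ?_ (funext fun j => ?_)
      · show (u 0 * z 0) / (‖u 0 * z 0‖ : ℂ) = u 0 * (z 0 / (‖z 0‖ : ℂ))
        rw [hn0, mul_div_assoc]
      · show (u j.succ * z j.succ) / _ = u j.succ * (z j.succ / _)
        rw [hns0, mul_div_assoc]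

end S5final

end ProofAux

/-- if `X_A` misses `{z_1 = 0}` and `a_1 ≠ 0`, the explicit map
`z ↦ (z_1/|z_1|, z_2/√(1-|z_1|²), …)` is an equivariant diffeomorphism from `X_A` onto
`S¹ × X_B`, and `B` is admissible. -/
theorem statement5 {n p : ℕ} (A : Fin (n + 1) → (Fin (p + 1) → ℝ))
    (hA : Admissible A)
    (hdisj : ∀ z ∈ linkSet A, z 0 ≠ 0)
    (ha : A 0 0 ≠ 0) :
    Admissible (reducedConfig A) ∧
    IsDiffeoOn
      (fun z : Fin (n + 1) → ℂ =>
        ((z 0 / (‖z 0‖ : ℂ), fun j : Fin n =>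
          z j.succ / ((Real.sqrt (1 - Complex.normSq (z 0)) : ℝ) : ℂ)) : ℂ × (Fin n → ℂ)))
      (linkSet A)
      {w : ℂ × (Fin n → ℂ) | ‖w.1‖ = 1 ∧ w.2 ∈ linkSet (reducedConfig A)} ∧
    -- equivariance with respect to the natural torus actions
    (∀ u : Fin (n + 1) → ℂ, (∀ i, ‖u i‖ = 1) → ∀ z ∈ linkSet A,
      (fun i => u i * z i) ∈ linkSet A ∧
      ((u 0 * z 0) / (‖u 0 * z 0‖ : ℂ),
        (fun j : Fin n => (u j.succ * z j.succ) /
          ((Real.sqrt (1 - Complex.normSq (u 0 * z 0)) : ℝ) : ℂ))) =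
      ((u 0 * (z 0 / (‖z 0‖ : ℂ)),
        fun j : Fin n => u j.succ *
          (z j.succ / ((Real.sqrt (1 - Complex.normSq (z 0)) : ℝ) : ℂ))) : ℂ × (Fin n → ℂ))) := by
  exact statement5' hA hdisj ha
end
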